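/- (Punctual apolar scheme in the affine chart) Assume char K = 0 and K algebraically closed, and let N_d = C(n+k,k) + C(n+k+1,k+1) if d = 2k+2 is even and N_d = 2·C(n+k,k) if d = 2k+1 is odd. Then for every nonzero f ∈ R_𝐝 there exists an ideal J of the polynomial ring K[z_{i,j} : 1 ≤ j ≤ s, 1 ≤ i ≤ n_j] in n variables such that the quotient K[z_{i,j}]/J is a local finite-dimensional K-algebra of dimension at most N_d, and the homogenization of J with respect to the variable z_0 is contained in the apolar ideal (u(f))^⊥. In other words, u(f) admits an apolar zero-dimensional scheme of length at most N_d that is punctual (supported at a single point) and contained in the affine chart {z_0 ≠ 0} of P^n. -/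

import Mathlib

open MvPolynomial

/-- Variables of `R`: `x_{i,j}` for `j : Fin s`, `i : Fin (n j + 1)` (index `0` is `x_{0,j}`). -/
abbrev RVar (s : ℕ) (n : Fin s → ℕ) := Σ j : Fin s, Fin (n j + 1)

/-- Variables of `S`: `none` is `z_0`, `some ⟨j,i⟩` is `z_{i+1,j}`. -/
abbrev SVar (s : ℕ) (n : Fin s → ℕ) := Option (Σ j : Fin s, Fin (n j))

/-- `f` is multihomogeneous of multidegree `d`. -/
def MultiHomog {K : Type*} [CommSemiring K] {s : ℕ} {n : Fin s → ℕ} (d : Fin s → ℕ)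
    (f : MvPolynomial (RVar s n) K) : Prop :=
  ∀ m ∈ f.support, ∀ j : Fin s, ∑ i : Fin (n j + 1), m ⟨j, i⟩ = d j

/-- The substitution `u : R → S`, `x_{0,j} ↦ z_0`, `x_{i,j} ↦ z_{i,j}` for `i ≥ 1`. -/
noncomputable def subst (K : Type*) [CommSemiring K] (s : ℕ) (n : Fin s → ℕ) :
    MvPolynomial (RVar s n) K →ₐ[K] MvPolynomial (SVar s n) K :=
  aeval fun v => if h : (v.2 : ℕ) = 0 then X none
    else X (some ⟨v.1, ⟨(v.2 : ℕ) - 1, by have := v.2.isLt; omega⟩⟩)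


/-- The action of `g` as a constant-coefficient differential operator on `p`: the
polynomial `g(∂) p`, defined bilinearly from the rule
`∂^μ z^ν = (∏ᵢ νᵢ(νᵢ-1)⋯(νᵢ-μᵢ+1)) z^(ν-μ)` (and `= 0` unless `μ ≤ ν`).
Thus `g` belongs to the apolar ideal `p^⊥` iff `diffOp g p = 0`. -/
noncomputable def diffOp {K : Type*} [CommSemiring K] {σ : Type*} [DecidableEq σ]
    (g p : MvPolynomial σ K) : MvPolynomial σ K :=
  ∑ μ ∈ g.support, ∑ ν ∈ p.support,
    if μ ≤ ν then
      monomial (ν - μ)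
        (coeff μ g * coeff ν p *
          ((∏ i ∈ μ.support, (ν i).descFactorial (μ i) : ℕ) : K))
    else 0

/-- An ideal of `MvPolynomial σ K` is homogeneous (w.r.t. total degree):
it contains all homogeneous components of its elements. -/
def IsHomogIdeal {K : Type*} [CommSemiring K] {σ : Type*}
    (I : Ideal (MvPolynomial σ K)) : Prop :=
  ∀ f ∈ I, ∀ k : ℕ, homogeneousComponent k f ∈ I

/-- An ideal of `MvPolynomial σ K` is saturated with respect to the irrelevant
maximal ideal `(X v : v)`. -/
def IsSatIdeal {K : Type*} [CommSemiring K] {σ : Type*}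
    (I : Ideal (MvPolynomial σ K)) : Prop :=
  ∀ f : MvPolynomial σ K, (∀ v : σ, X v * f ∈ I) → f ∈ I

/-- `dim_K (S/I)_t`, the dimension of the degree-`t` homogeneous component of `S/I`,
computed as `dim (S_t / (I ∩ S_t))`. -/
noncomputable def quotDim (K : Type*) [Field K] {σ : Type*}
    (I : Ideal (MvPolynomial σ K)) (t : ℕ) : ℕ :=
  Module.finrank K
    (↥(homogeneousSubmodule σ K t) ⧸
      Submodule.comap (homogeneousSubmodule σ K t).subtype (Submodule.restrictScalars K I))

/-- Homogenization of a polynomial in the variables `z_{i,j}` with respect to the extra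
variable `z_0 = X none`: each monomial `z^ν` is multiplied by `z_0^(deg q - deg ν)`. -/
noncomputable def homogenize {K : Type*} [CommSemiring K] {s : ℕ} {n : Fin s → ℕ}
    (q : MvPolynomial (Σ j : Fin s, Fin (n j)) K) : MvPolynomial (SVar s n) K :=
  ∑ ν ∈ q.support,
    monomial
      (Finsupp.mapDomain (some : (Σ j : Fin s, Fin (n j)) → SVar s n) ν +
        Finsupp.single (none : SVar s n) (q.totalDegree - ν.sum fun _ e => e))
      (coeff ν q)

/-!
Write `F = u f`, homogeneous of degree `d`, and let `g` be its dehomogenization at `z₀` in the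
divided-power sense, a polynomial of degree `≤ d`. Take `J = g^⊥`, the ideal of operators killing
`g`. Homogenizing an operator that kills `g` gives one that kills `F`. A polynomial without
constant term has its `(d+1)`-st power in `J`, so `K[z]/J` is local, supported at the origin of
the chart `z₀ ≠ 0`. Finally `K[z]/J ≅ {q(∂) g}`: if `deg q ≤ k` this lies in the image of the
polynomials of degree `≤ k`, and otherwise it has degree `≤ d - k - 1`. Counting monomials
bounds the length by `C(n+k,k) + C(n+d-k-1, d-k-1) = N_d`.
-/

namespace Finsupp

variable {σ : Type*}

lemma mapDomain_apply_of_forall_eq {τ M : Type*} [AddCommMonoid M] {f : σ → τ} {a : σ}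
    (h : ∀ x, f x = f a → x = a) (v : σ →₀ M) : v.mapDomain f (f a) = v a := by
  classical
  rw [mapDomain_apply_eq_sum, Finset.sum_eq_single a
    (fun b hb hne => (hne (h b (Finset.mem_filter.1 hb).2)).elim)]
  intro ha
  rw [← notMem_support_iff]
  exact fun hs => ha (Finset.mem_filter.2 ⟨hs, rfl⟩)

lemma mapDomain_some_add_single_none (ν : σ →₀ ℕ) (a : ℕ) :
    ν.mapDomain Option.some + single none a = ν.optionElim a := by
  ext (_ | x) <;> simp [mapDomain_of_notMem_range, mapDomain_apply (Option.some_injective σ)]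

lemma degree_optionElim (ν : σ →₀ ℕ) (a : ℕ) : (ν.optionElim a).degree = a + ν.degree := by
  rw [← mapDomain_some_add_single_none, map_add, degree_mapDomain, degree_single, add_comm]

lemma degree_eq_add_degree_some (ν : Option σ →₀ ℕ) : ν.degree = ν none + ν.some.degree := by
  conv_lhs => rw [← optionElim_some ν]
  exact degree_optionElim _ _

/-- The constant in `∂^μ z^ν = ν.descFactorial μ • z^(ν - μ)`. -/
def descFactorial (ν μ : σ →₀ ℕ) : ℕ :=
  ∏ i ∈ μ.support, (ν i).descFactorial (μ i)

lemma descFactorial_eq_prod_of_support_subset (ν μ : σ →₀ ℕ) {s : Finset σ}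
    (hs : μ.support ⊆ s) : ν.descFactorial μ = ∏ i ∈ s, (ν i).descFactorial (μ i) :=
  Finset.prod_subset hs fun i _ hi => by
    rw [notMem_support_iff.mp hi, Nat.descFactorial_zero]

@[simp]
lemma descFactorial_zero_right (ν : σ →₀ ℕ) : ν.descFactorial 0 = 1 := by
  simp [descFactorial]

lemma descFactorial_add_right [DecidableEq σ] (τ μ μ' : σ →₀ ℕ) :
    (τ + μ + μ').descFactorial (μ + μ') =
      (τ + μ + μ').descFactorial μ' * (τ + μ).descFactorial μ := by
  rw [descFactorial_eq_prod_of_support_subset _ _ support_add,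
    descFactorial_eq_prod_of_support_subset _ _ Finset.subset_union_right,
    descFactorial_eq_prod_of_support_subset _ _ Finset.subset_union_left,
    ← Finset.prod_mul_distrib]
  refine Finset.prod_congr rfl fun i _ => ?_
  simp only [coe_add, Pi.add_apply]
  rw [← Nat.descFactorial_mul_descFactorial (Nat.le_add_left (μ' i) (μ i)), Nat.add_sub_cancel,
    Nat.add_sub_cancel, mul_comm]

lemma descFactorial_optionElim [DecidableEq σ] (ν μ : σ →₀ ℕ) (a b : ℕ) :
    (ν.optionElim a).descFactorial (μ.optionElim b) = a.descFactorial b * ν.descFactorial μ := by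
  have hs : (μ.optionElim b).support ⊆ Finset.insertNone μ.support := by
    intro x hx
    cases x <;> simp_all
  rw [descFactorial_eq_prod_of_support_subset _ _ hs, Finset.prod_insertNone,
    descFactorial]
  simp

end Finsupp

section DiffOp

variable {K σ : Type*} [CommSemiring K] [DecidableEq σ]

theorem coeff_diffOp (g p : MvPolynomial σ K) (τ : σ →₀ ℕ) :
    coeff τ (diffOp g p) =
      ∑ μ ∈ g.support, coeff μ g * coeff (τ + μ) p * ((τ + μ).descFactorial μ : K) := by
  rw [diffOp, coeff_sum]
  refine Finset.sum_congr rfl fun μ _ => ?_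
  have hcoeff : ∀ ν : σ →₀ ℕ, ∀ c : K,
      coeff τ (if μ ≤ ν then monomial (ν - μ) c else 0) = if τ + μ = ν then c else 0 := by
    intro ν c
    by_cases hle : μ ≤ ν
    · simp only [if_pos hle, coeff_monomial, tsub_eq_iff_eq_add_of_le hle, eq_comm]
    · rw [if_neg hle, coeff_zero, if_neg]
      rintro rfl
      exact hle le_add_self
  simp only [coeff_sum, hcoeff, Finset.sum_ite_eq]
  split_ifs with h
  · rfl
  · rw [notMem_support_iff.mp h, mul_zero, zero_mul]

theorem coeff_diffOp_of_support_subset {g : MvPolynomial σ K} (p : MvPolynomial σ K)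
    {s : Finset (σ →₀ ℕ)} (hs : g.support ⊆ s) (τ : σ →₀ ℕ) :
    coeff τ (diffOp g p) =
      ∑ μ ∈ s, coeff μ g * coeff (τ + μ) p * ((τ + μ).descFactorial μ : K) := by
  rw [coeff_diffOp]
  exact Finset.sum_subset hs fun μ _ hμ => by rw [notMem_support_iff.mp hμ, zero_mul, zero_mul]

theorem coeff_diffOp_monomial (μ : σ →₀ ℕ) (c : K) (p : MvPolynomial σ K) (τ : σ →₀ ℕ) :
    coeff τ (diffOp (monomial μ c) p) = c * coeff (τ + μ) p * ((τ + μ).descFactorial μ : K) := by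
  rw [coeff_diffOp_of_support_subset p support_monomial_subset, Finset.sum_singleton,
    coeff_monomial, if_pos rfl]

theorem diffOp_add_left (g h p : MvPolynomial σ K) :
    diffOp (g + h) p = diffOp g p + diffOp h p := by
  classical
  ext τ
  rw [coeff_add, coeff_diffOp_of_support_subset p support_add,
    coeff_diffOp_of_support_subset p Finset.subset_union_left,
    coeff_diffOp_of_support_subset p Finset.subset_union_right, ← Finset.sum_add_distrib]
  simp only [coeff_add, add_mul]

theorem diffOp_smul_left (c : K) (g p : MvPolynomial σ K) :
    diffOp (c • g) p = c • diffOp g p := by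
  ext τ
  rw [coeff_smul, coeff_diffOp_of_support_subset p support_smul, coeff_diffOp,
    Finset.smul_sum]
  simp only [coeff_smul, smul_eq_mul, mul_assoc]

theorem diffOp_add_right (g p q : MvPolynomial σ K) :
    diffOp g (p + q) = diffOp g p + diffOp g q := by
  ext τ
  simp only [coeff_add, coeff_diffOp, ← Finset.sum_add_distrib, mul_add, add_mul]

@[simp]
theorem diffOp_zero_right (g : MvPolynomial σ K) : diffOp g 0 = 0 := by
  simp [diffOp]

@[simp]
theorem diffOp_one (p : MvPolynomial σ K) : diffOp 1 p = p := by
  ext τ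
  rw [one_def, coeff_diffOp_monomial, add_zero, Finsupp.descFactorial_zero_right,
    Nat.cast_one, one_mul, mul_one]

theorem diffOp_mul (g h p : MvPolynomial σ K) :
    diffOp (g * h) p = diffOp g (diffOp h p) := by
  induction g using MvPolynomial.induction_on' with
  | add g₁ g₂ ih₁ ih₂ => rw [add_mul, diffOp_add_left, ih₁, ih₂, diffOp_add_left]
  | monomial μ c =>
    induction h using MvPolynomial.induction_on' with
    | add h₁ h₂ ih₁ ih₂ =>
      rw [mul_add, diffOp_add_left, ih₁, ih₂, diffOp_add_left, diffOp_add_right]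
    | monomial μ' c' =>
      ext τ
      rw [monomial_mul, coeff_diffOp_monomial, coeff_diffOp_monomial, coeff_diffOp_monomial,
        ← add_assoc, Finsupp.descFactorial_add_right]
      push_cast
      ring

theorem totalDegree_diffOp_monomial_le (μ : σ →₀ ℕ) (c : K) (p : MvPolynomial σ K) :
    (diffOp (monomial μ c) p).totalDegree ≤ p.totalDegree - μ.degree := by
  refine Finset.sup_le fun τ hτ => ?_
  rw [mem_support_iff, coeff_diffOp_monomial] at hτ
  have hτμ : (τ + μ).degree ≤ p.totalDegree :=
    le_totalDegree (mem_support_iff.mpr fun h => hτ (by rw [h, mul_zero, zero_mul]))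
  rw [map_add] at hτμ
  exact Nat.le_sub_of_add_le hτμ

theorem diffOp_eq_zero_of_totalDegree_lt {g p : MvPolynomial σ K}
    (h : ∀ μ ∈ g.support, p.totalDegree < μ.degree) : diffOp g p = 0 := by
  ext τ
  rw [coeff_diffOp, coeff_zero]
  refine Finset.sum_eq_zero fun μ hμ => ?_
  have hτμ : p.totalDegree < (τ + μ).degree := by
    rw [map_add]
    exact (h μ hμ).trans_le le_add_self
  rw [coeff_eq_zero_of_totalDegree_lt hτμ, mul_zero, zero_mul]

variable (K) in
noncomputable def apolarMap (p : MvPolynomial σ K) : MvPolynomial σ K →ₗ[K] MvPolynomial σ K where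
  toFun g := diffOp g p
  map_add' g h := diffOp_add_left g h p
  map_smul' c g := diffOp_smul_left c g p

noncomputable def apolarIdeal (p : MvPolynomial σ K) : Ideal (MvPolynomial σ K) where
  toAddSubmonoid := (LinearMap.ker (apolarMap K p)).toAddSubmonoid
  smul_mem' r g (hg : diffOp g p = 0) := by
    change diffOp (r * g) p = 0
    rw [diffOp_mul, hg, diffOp_zero_right]

theorem mem_apolarIdeal {p g : MvPolynomial σ K} : g ∈ apolarIdeal p ↔ diffOp g p = 0 :=
  Iff.rfl

end DiffOp

theorem isLocalRing_of_forall_isNilpotent_sub_algebraMap {K A : Type*} [Field K] [CommRing A]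
    [Algebra K A] [Nontrivial A] (h : ∀ a : A, ∃ c : K, IsNilpotent (a - algebraMap K A c)) :
    IsLocalRing A := by
  refine IsLocalRing.of_isUnit_or_isUnit_one_sub_self fun a => ?_
  obtain ⟨c, hc⟩ := h a
  by_cases hc0 : c = 0
  · rw [hc0, map_zero, sub_zero] at hc
    exact Or.inr hc.isUnit_one_sub
  · have hu := hc.isUnit_add_left_of_commute ((IsUnit.mk0 c hc0).map (algebraMap K A))
      (Commute.all _ _)
    rw [add_sub_cancel] at hu
    exact Or.inl hu

namespace MvPolynomial

variable {K σ : Type*} [CommSemiring K]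

theorem coeff_pow_eq_zero_of_degree_lt {y : MvPolynomial σ K} (hy : constantCoeff y = 0)
    {N : ℕ} {μ : σ →₀ ℕ} (hμ : μ.degree < N) : coeff μ (y ^ N) = 0 := by
  have hN := MvPowerSeries.le_order_pow_of_constantCoeff_eq_zero N
    (f := (y : MvPowerSeries σ K))
    (by rwa [← MvPowerSeries.coeff_zero_eq_constantCoeff_apply, coeff_coe, ← constantCoeff_eq])
  rw [← coeff_coe, coe_pow]
  exact MvPowerSeries.coeff_of_lt_order ((Nat.cast_lt.mpr hμ).trans_le hN)

theorem finrank_restrictTotalDegree [StrongRankCondition K] [Fintype σ] (m : ℕ) :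
    Module.finrank K (restrictTotalDegree σ K m) = (Fintype.card σ + m).choose m := by
  classical
  let e : {ν : σ →₀ ℕ // ν.degree ≤ m} ≃ {P : Option σ →₀ ℕ // P.sum (fun _ ↦ id) = m} :=
    { toFun ν := ⟨ν.1.optionElim (m - ν.1.degree), by
        change (Finsupp.optionElim _ _).degree = m
        rw [Finsupp.degree_optionElim]
        have := ν.2
        omega⟩
      invFun P := ⟨P.1.some, by
        have h : P.1.degree = m := P.2
        rw [Finsupp.degree_eq_add_degree_some] at h
        omega⟩
      left_inv ν := Subtype.ext (Finsupp.some_optionElim _ _)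
      right_inv P := Subtype.ext <| by
        have h : P.1.degree = m := P.2
        rw [Finsupp.degree_eq_add_degree_some] at h
        change P.1.some.optionElim (m - P.1.some.degree) = P.1
        rw [show m - P.1.some.degree = P.1 none by omega, Finsupp.optionElim_some] }
  rw [restrictTotalDegree, Module.finrank_eq_nat_card_basis (basisRestrictSupport K _)]
  change Nat.card {ν : σ →₀ ℕ // ν.degree ≤ m} = _
  rw [Nat.card_congr (e.trans (Sym.equivNatSum (Option σ) m).symm), Sym.natCard_sym_eq_choose,
    Nat.card_eq_fintype_card, Fintype.card_option, Nat.add_right_comm, Nat.add_sub_cancel]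

end MvPolynomial

section ApolarQuotient

variable {K σ : Type*} [Field K] [DecidableEq σ]

theorem pow_mem_apolarIdeal (p : MvPolynomial σ K) {y : MvPolynomial σ K}
    (hy : constantCoeff y = 0) : y ^ (p.totalDegree + 1) ∈ apolarIdeal p :=
  diffOp_eq_zero_of_totalDegree_lt fun _ hμ => by
    by_contra! h
    exact mem_support_iff.mp hμ (coeff_pow_eq_zero_of_degree_lt hy (Nat.lt_succ_of_le h))

theorem apolarIdeal_ne_top {p : MvPolynomial σ K} (hp : p ≠ 0) : apolarIdeal p ≠ ⊤ := by
  intro h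
  have h1 : (1 : MvPolynomial σ K) ∈ apolarIdeal p := h ▸ Submodule.mem_top
  rw [mem_apolarIdeal, diffOp_one] at h1
  exact hp h1

theorem isLocalRing_quotient_apolarIdeal {p : MvPolynomial σ K} (hp : p ≠ 0) :
    IsLocalRing (MvPolynomial σ K ⧸ apolarIdeal p) := by
  have := Ideal.Quotient.nontrivial_iff.mpr (apolarIdeal_ne_top hp)
  refine isLocalRing_of_forall_isNilpotent_sub_algebraMap (K := K) fun a => ?_
  obtain ⟨x, rfl⟩ := Ideal.Quotient.mk_surjective a
  refine ⟨constantCoeff x, p.totalDegree + 1, ?_⟩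
  rw [← Ideal.Quotient.mk_algebraMap, ← map_sub, ← map_pow, Ideal.Quotient.eq_zero_iff_mem]
  exact pow_mem_apolarIdeal p (by simp [algebraMap_eq])

noncomputable def quotientApolarIdealEquivRange (p : MvPolynomial σ K) :
    (MvPolynomial σ K ⧸ apolarIdeal p) ≃ₗ[K] LinearMap.range (apolarMap K p) :=
  (Submodule.Quotient.restrictScalarsEquiv K (apolarIdeal p)).symm.trans
    (apolarMap K p).quotKerEquivRange

theorem range_apolarMap_le {p : MvPolynomial σ K} {D : ℕ} (hp : p.totalDegree ≤ D) (k : ℕ) :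
    LinearMap.range (apolarMap K p) ≤
      (restrictTotalDegree σ K k).map (apolarMap K p) ⊔ restrictTotalDegree σ K (D - (k + 1)) := by
  rintro _ ⟨q, rfl⟩
  have hq : apolarMap K p q = ∑ μ ∈ q.support, apolarMap K p (monomial μ (coeff μ q)) := by
    rw [← map_sum, ← as_sum]
  rw [hq]
  refine Submodule.sum_mem _ fun μ _ => ?_
  by_cases hμ : μ.degree ≤ k
  · refine Submodule.mem_sup_left (Submodule.mem_map_of_mem ?_)
    exact (mem_restrictTotalDegree _ _ _).mpr ((totalDegree_monomial_le _ _).trans hμ)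
  · refine Submodule.mem_sup_right ((mem_restrictTotalDegree _ _ _).mpr ?_)
    exact (totalDegree_diffOp_monomial_le μ _ p).trans (by omega)

variable [Fintype σ]

theorem finiteDimensional_quotient_apolarIdeal (p : MvPolynomial σ K) :
    FiniteDimensional K (MvPolynomial σ K ⧸ apolarIdeal p) :=
  have := Submodule.finiteDimensional_of_le (range_apolarMap_le (K := K) (p := p) le_rfl 0)
  (quotientApolarIdealEquivRange p).symm.finiteDimensional

theorem finrank_quotient_apolarIdeal_le {p : MvPolynomial σ K} {D : ℕ} (hp : p.totalDegree ≤ D)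
    (k : ℕ) :
    Module.finrank K (MvPolynomial σ K ⧸ apolarIdeal p) ≤
      (Fintype.card σ + k).choose k + (Fintype.card σ + (D - (k + 1))).choose (D - (k + 1)) :=
  calc Module.finrank K (MvPolynomial σ K ⧸ apolarIdeal p)
      = Module.finrank K (LinearMap.range (apolarMap K p)) :=
        (quotientApolarIdealEquivRange p).finrank_eq
    _ ≤ Module.finrank K ↥((restrictTotalDegree σ K k).map (apolarMap K p) ⊔
          restrictTotalDegree σ K (D - (k + 1))) :=
        Submodule.finrank_mono (range_apolarMap_le hp k)
    _ ≤ Module.finrank K ((restrictTotalDegree σ K k).map (apolarMap K p)) +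
          Module.finrank K (restrictTotalDegree σ K (D - (k + 1))) :=
        Submodule.finrank_add_le_finrank_add_finrank _ _
    _ ≤ _ := add_le_add ((Submodule.finrank_map_le _ _).trans_eq (finrank_restrictTotalDegree k))
        (finrank_restrictTotalDegree _).le

end ApolarQuotient

section Homogenization

variable {K σ : Type*} [CommSemiring K] [DecidableEq σ]

/-- Dehomogenization at `z₀ = none` in the divided-power sense: as `z₀ ^ a = a! • z₀^[a]`,
sending `z₀^[a] ↦ 1` weights `z^ν` by `(ν none)!`. This is the normalization for which apolarity
passes to homogenizations (`diffOp_homogenization_eq_zero`). -/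
noncomputable def dehomogenize (F : MvPolynomial (Option σ) K) : MvPolynomial σ K :=
  ∑ ν ∈ F.support, monomial ν.some ((ν none).factorial * coeff ν F)

noncomputable def homogenization (q : MvPolynomial σ K) : MvPolynomial (Option σ) K :=
  ∑ μ ∈ q.support, monomial (μ.optionElim (q.totalDegree - μ.degree)) (coeff μ q)

theorem homogenize_eq_homogenization {s : ℕ} {n : Fin s → ℕ}
    (q : MvPolynomial (Σ j : Fin s, Fin (n j)) K) : homogenize q = homogenization q := by
  simp only [homogenize, homogenization, Finsupp.mapDomain_some_add_single_none]
  rfl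

theorem coeff_diffOp_homogenization (q : MvPolynomial σ K) (F : MvPolynomial (Option σ) K)
    (τ : σ →₀ ℕ) (a : ℕ) :
    coeff (τ.optionElim a) (diffOp (homogenization q) F) =
      ∑ μ ∈ q.support, coeff μ q *
        coeff ((τ + μ).optionElim (a + (q.totalDegree - μ.degree))) F *
        (((a + (q.totalDegree - μ.degree)).descFactorial (q.totalDegree - μ.degree) *
          (τ + μ).descFactorial μ : ℕ) : K) := by
  change coeff _ (apolarMap K F (homogenization q)) = _
  rw [homogenization, map_sum, coeff_sum]
  refine Finset.sum_congr rfl fun μ _ => ?_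
  rw [apolarMap, LinearMap.coe_mk, AddHom.coe_mk, coeff_diffOp_monomial,
    ← Finsupp.optionElim_add, Finsupp.descFactorial_optionElim]

variable {F : MvPolynomial (Option σ) K} {D : ℕ}

theorem coeff_dehomogenize (hF : F.IsHomogeneous D) (ν : σ →₀ ℕ) :
    coeff ν (dehomogenize F) =
      (D - ν.degree).factorial * coeff (ν.optionElim (D - ν.degree)) F := by
  have hfiber : ∀ τ ∈ F.support, τ.some = ν → τ = ν.optionElim (D - ν.degree) := by
    intro τ hτ hν
    have hdeg : τ.degree = D := (hF.degree_eq_sum_deg_support hτ).symm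
    rw [Finsupp.degree_eq_add_degree_some, hν] at hdeg
    rw [← Finsupp.optionElim_some τ, hν, show τ none = D - ν.degree by omega]
  rw [dehomogenize, coeff_sum, Finset.sum_eq_single (ν.optionElim (D - ν.degree))]
  · rw [Finsupp.some_optionElim, coeff_monomial, if_pos rfl, Finsupp.optionElim_apply_none]
  · intro τ hτ hne
    rw [coeff_monomial, if_neg fun hν => hne (hfiber τ hτ hν)]
  · intro hν
    rw [notMem_support_iff.mp hν, mul_zero, monomial_zero, coeff_zero]

theorem totalDegree_dehomogenize_le (hF : F.IsHomogeneous D) :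
    (dehomogenize F).totalDegree ≤ D := by
  refine Finset.sup_le fun ν hν => ?_
  rw [mem_support_iff, coeff_dehomogenize hF] at hν
  have hdeg : (ν.optionElim (D - ν.degree)).degree = D := by
    by_contra h
    exact hν (by rw [hF.coeff_eq_zero h, mul_zero])
  rw [Finsupp.degree_optionElim] at hdeg
  change ν.degree ≤ D
  omega

theorem dehomogenize_ne_zero [NoZeroDivisors K] [CharZero K] (hF : F.IsHomogeneous D)
    (hF0 : F ≠ 0) : dehomogenize F ≠ 0 := by
  obtain ⟨ν, hν⟩ := exists_coeff_ne_zero hF0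
  have hdeg : ν.degree = D := (hF.degree_eq_sum_deg_support (mem_support_iff.mpr hν)).symm
  rw [Finsupp.degree_eq_add_degree_some] at hdeg
  intro h
  have hcoeff := coeff_dehomogenize hF ν.some
  rw [h, coeff_zero, show D - ν.some.degree = ν none by omega, Finsupp.optionElim_some] at hcoeff
  exact mul_ne_zero (Nat.cast_ne_zero.mpr (ν none).factorial_ne_zero) hν hcoeff.symm

theorem factorial_mul_coeff_diffOp_homogenization (hF : F.IsHomogeneous D)
    (q : MvPolynomial σ K) {τ : σ →₀ ℕ} {a : ℕ} (hD : a + q.totalDegree + τ.degree = D) :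
    a.factorial * coeff (τ.optionElim a) (diffOp (homogenization q) F) =
      coeff τ (diffOp q (dehomogenize F)) := by
  rw [coeff_diffOp_homogenization, coeff_diffOp, Finset.mul_sum]
  refine Finset.sum_congr rfl fun μ hμ => ?_
  have hμ : μ.degree ≤ q.totalDegree := le_totalDegree hμ
  have hcodeg : D - (τ + μ).degree = a + (q.totalDegree - μ.degree) := by
    rw [map_add]
    omega
  have hfac : ((a + (q.totalDegree - μ.degree)).factorial : K) =
      a.factorial * (a + (q.totalDegree - μ.degree)).descFactorial (q.totalDegree - μ.degree) := by
    rw [← Nat.factorial_mul_descFactorial le_add_self, Nat.add_sub_cancel, Nat.cast_mul]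
  rw [coeff_dehomogenize hF, hcodeg, hfac]
  push_cast
  ring

theorem coeff_diffOp_homogenization_eq_zero (hF : F.IsHomogeneous D) (q : MvPolynomial σ K)
    {τ : σ →₀ ℕ} {a : ℕ} (hD : a + q.totalDegree + τ.degree ≠ D) :
    coeff (τ.optionElim a) (diffOp (homogenization q) F) = 0 := by
  rw [coeff_diffOp_homogenization]
  refine Finset.sum_eq_zero fun μ hμ => ?_
  have hμ : μ.degree ≤ q.totalDegree := le_totalDegree hμ
  rw [hF.coeff_eq_zero, mul_zero, zero_mul]
  rw [Finsupp.degree_optionElim, map_add]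
  omega

theorem diffOp_homogenization_eq_zero [NoZeroDivisors K] [CharZero K] (hF : F.IsHomogeneous D)
    {q : MvPolynomial σ K} (hq : diffOp q (dehomogenize F) = 0) :
    diffOp (homogenization q) F = 0 := by
  ext τ'
  obtain ⟨τ, a, rfl⟩ : ∃ τ a, τ' = τ.optionElim a :=
    ⟨τ'.some, τ' none, (Finsupp.optionElim_some τ').symm⟩
  rw [coeff_zero]
  by_cases hD : a + q.totalDegree + τ.degree = D
  · have h := factorial_mul_coeff_diffOp_homogenization hF q hD
    rw [hq, coeff_zero] at h
    exact (mul_eq_zero.mp h).resolve_left (Nat.cast_ne_zero.mpr a.factorial_ne_zero)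
  · exact coeff_diffOp_homogenization_eq_zero hF q hD

end Homogenization

namespace MvPolynomial

variable {K σ τ : Type*} [CommSemiring K]

theorem coeff_rename_mapDomain_of_injOn {f : σ → τ} {φ : MvPolynomial σ K}
    (hφ : Set.InjOn (Finsupp.mapDomain f) (φ.support : Set (σ →₀ ℕ))) {d : σ →₀ ℕ}
    (hd : d ∈ φ.support) :
    (rename f φ).coeff (d.mapDomain f) = φ.coeff d := by
  classical
  conv_lhs => rw [φ.as_sum]
  rw [map_sum, coeff_sum, Finset.sum_eq_single d]
  · rw [rename_monomial, coeff_monomial, if_pos rfl]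
  · intro b hb hne
    rw [rename_monomial, coeff_monomial, if_neg fun h => hne (hφ hb hd h)]
  · exact fun h => absurd hd h

theorem rename_ne_zero_of_injOn {f : σ → τ} {φ : MvPolynomial σ K}
    (hφ : Set.InjOn (Finsupp.mapDomain f) (φ.support : Set (σ →₀ ℕ))) (h0 : φ ≠ 0) :
    rename f φ ≠ 0 := by
  obtain ⟨d, hd⟩ := exists_coeff_ne_zero h0
  intro h
  rw [← coeff_rename_mapDomain_of_injOn hφ (mem_support_iff.mpr hd), h, coeff_zero] at hd
  exact hd rfl

end MvPolynomial

section Subst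

variable {K : Type*} [CommSemiring K] {s : ℕ} {n : Fin s → ℕ}

def substVar (s : ℕ) (n : Fin s → ℕ) (v : RVar s n) : SVar s n :=
  Fin.cases none (fun i => some ⟨v.1, i⟩) v.2

theorem subst_eq_rename : subst K s n = rename (substVar s n) := by
  refine algHom_ext fun ⟨j, i⟩ => ?_
  rw [subst, aeval_X, rename_X]
  cases i using Fin.cases with
  | zero => rfl
  | succ i => simp [substVar]

theorem eq_of_substVar_eq_succ {v : RVar s n} {j : Fin s} {i : Fin (n j)}
    (h : substVar s n v = substVar s n ⟨j, i.succ⟩) : v = ⟨j, i.succ⟩ := by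
  obtain ⟨j', i'⟩ := v
  cases i' using Fin.cases with
  | zero => simp [substVar] at h
  | succ i' =>
    simp only [substVar, Fin.cases_succ, Option.some.injEq, Sigma.mk.injEq] at h
    obtain ⟨rfl, h⟩ := h
    rw [eq_of_heq h]

variable {d : Fin s → ℕ} {f : MvPolynomial (RVar s n) K}

theorem MultiHomog.isHomogeneous (hf : MultiHomog d f) : f.IsHomogeneous (∑ j, d j) := by
  intro m hm
  rw [Pi.one_def, ← Finsupp.degree_eq_weight_one, Finsupp.degree_eq_sum, Fintype.sum_sigma]
  exact Finset.sum_congr rfl fun j _ => hf m (mem_support_iff.mpr hm) j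

theorem MultiHomog.injOn_mapDomain_substVar (hf : MultiHomog d f) :
    Set.InjOn (Finsupp.mapDomain (substVar s n)) (f.support : Set (RVar s n →₀ ℕ)) := by
  intro m hm m' hm' h
  have hsucc : ∀ j (i : Fin (n j)), m ⟨j, i.succ⟩ = m' ⟨j, i.succ⟩ := fun j i => by
    have hfiber : ∀ v, substVar s n v = substVar s n ⟨j, i.succ⟩ → v = ⟨j, i.succ⟩ :=
      fun _ => eq_of_substVar_eq_succ
    rw [← Finsupp.mapDomain_apply_of_forall_eq hfiber m, h,
      Finsupp.mapDomain_apply_of_forall_eq hfiber m']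
  ext ⟨j, i⟩
  cases i using Fin.cases with
  | succ i => exact hsucc j i
  | zero =>
    have hdeg := hf m hm j
    have hdeg' := hf m' hm' j
    rw [Fin.sum_univ_succ] at hdeg hdeg'
    have := Finset.sum_congr rfl fun i (_ : i ∈ Finset.univ) => hsucc j i
    omega

theorem MultiHomog.isHomogeneous_subst (hf : MultiHomog d f) :
    (subst K s n f).IsHomogeneous (∑ j, d j) := by
  rw [subst_eq_rename]
  exact hf.isHomogeneous.rename_isHomogeneous

theorem MultiHomog.subst_ne_zero (hf : MultiHomog d f) (hf0 : f ≠ 0) : subst K s n f ≠ 0 := by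
  rw [subst_eq_rename]
  exact MvPolynomial.rename_ne_zero_of_injOn hf.injOn_mapDomain_substVar hf0

end Subst

theorem stmt10_general (K : Type*) [Field K] [CharZero K]
    (s : ℕ) (n : Fin s → ℕ) (d : Fin s → ℕ)
    (k Nd : ℕ)
    (hNd : (∑ j, d j = 2 * k + 2 ∧
              Nd = Nat.choose ((∑ j, n j) + k) k + Nat.choose ((∑ j, n j) + k + 1) (k + 1)) ∨
           (∑ j, d j = 2 * k + 1 ∧ Nd = 2 * Nat.choose ((∑ j, n j) + k) k))
    (f : MvPolynomial (RVar s n) K) (hf : MultiHomog d f) (hf0 : f ≠ 0) :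
    ∃ J : Ideal (MvPolynomial (Σ j : Fin s, Fin (n j)) K),
      IsLocalRing (MvPolynomial (Σ j : Fin s, Fin (n j)) K ⧸ J) ∧
      FiniteDimensional K (MvPolynomial (Σ j : Fin s, Fin (n j)) K ⧸ J) ∧
      Module.finrank K (MvPolynomial (Σ j : Fin s, Fin (n j)) K ⧸ J) ≤ Nd ∧
      ∀ g ∈ Ideal.span (homogenize '' (J : Set (MvPolynomial (Σ j : Fin s, Fin (n j)) K))),
        diffOp g (subst K s n f) = 0 := by
  have hF := hf.isHomogeneous_subst
  set g := dehomogenize (subst K s n f)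
  refine ⟨apolarIdeal g, isLocalRing_quotient_apolarIdeal (dehomogenize_ne_zero hF
    (hf.subst_ne_zero hf0)), finiteDimensional_quotient_apolarIdeal g, ?_, ?_⟩
  · refine (finrank_quotient_apolarIdeal_le (totalDegree_dehomogenize_le hF) k).trans_eq ?_
    simp only [Fintype.card_sigma, Fintype.card_fin]
    rcases hNd with ⟨hD, rfl⟩ | ⟨hD, rfl⟩ <;> rw [hD]
    · rw [show 2 * k + 2 - (k + 1) = k + 1 by omega, ← add_assoc]
    · rw [show 2 * k + 1 - (k + 1) = k by omega, two_mul]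
  · intro q hq
    refine mem_apolarIdeal.mp (Ideal.span_le.mpr ?_ hq)
    rintro _ ⟨p, hp, rfl⟩
    rw [SetLike.mem_coe, mem_apolarIdeal, homogenize_eq_homogenization]
    exact diffOp_homogenization_eq_zero hF hp

/-- **punctual apolar scheme in the affine chart.** With
`N_d = C(n+k,k) + C(n+k+1,k+1)` if `d = 2k+2` and `N_d = 2·C(n+k,k)` if `d = 2k+1`
(`n = ∑ nⱼ`, `d = ∑ dⱼ`): for every nonzero multihomogeneous `f ∈ R_𝐝` there is an ideal
`J` of `K[z_{i,j}]` whose quotient is a local finite-dimensional `K`-algebra of dimension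
at most `N_d`, and whose homogenization w.r.t. `z_0` is contained in the apolar ideal
`(u f)^⊥`; i.e. `u f` admits an apolar punctual scheme of length `≤ N_d` contained in the
affine chart `{z_0 ≠ 0}` of `ℙⁿ`. -/
theorem stmt10 (K : Type*) [Field K] [IsAlgClosed K] [CharZero K]
    (s : ℕ) (hs : 0 < s) (n : Fin s → ℕ) (hn : ∀ j, 0 < n j) (d : Fin s → ℕ)
    (k Nd : ℕ)
    (hNd : (∑ j, d j = 2 * k + 2 ∧
              Nd = Nat.choose ((∑ j, n j) + k) k + Nat.choose ((∑ j, n j) + k + 1) (k + 1)) ∨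
           (∑ j, d j = 2 * k + 1 ∧ Nd = 2 * Nat.choose ((∑ j, n j) + k) k))
    (f : MvPolynomial (RVar s n) K) (hf : MultiHomog d f) (hf0 : f ≠ 0) :
    ∃ J : Ideal (MvPolynomial (Σ j : Fin s, Fin (n j)) K),
      IsLocalRing (MvPolynomial (Σ j : Fin s, Fin (n j)) K ⧸ J) ∧
      FiniteDimensional K (MvPolynomial (Σ j : Fin s, Fin (n j)) K ⧸ J) ∧
      Module.finrank K (MvPolynomial (Σ j : Fin s, Fin (n j)) K ⧸ J) ≤ Nd ∧
      ∀ g ∈ Ideal.span (homogenize '' (J : Set (MvPolynomial (Σ j : Fin s, Fin (n j)) K))),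
        diffOp g (subst K s n f) = 0 :=
  stmt10_general K s n d k Nd hNd f hf hf0
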